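/- For every tree T on n ≥ 5 vertices, there exists a path-star tree P_{n−g,g} on n vertices (for some 2 ≤ g ≤ n−3) such that the distance between center and subtree core satisfies d_{P_{n−g,g}}(C, S_c) ≥ d_T(C, S_c). -/

import Mathlib

open SimpleGraph

/-- Eccentricity of a vertex: maximum distance to any vertex. -/
noncomputable def ecc {V : Type*} [Fintype V] (G : SimpleGraph V) (v : V) : ℕ :=
  Finset.univ.sup fun u => G.dist u v

/-- Center: vertices of minimum eccentricity. -/
noncomputable def center {V : Type*} [Fintype V] (G : SimpleGraph V) : Set V :=
  {v | ∀ u, ecc G v ≤ ecc G u}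

/-- Number of vertices of the component of `G - v` containing `u`; this equals the
number of edges of the corresponding branch of a tree at `v`. -/
noncomputable def branchSize {V : Type*} (G : SimpleGraph V) (v : V) (u : {x : V // x ≠ v}) : ℕ :=
  Set.ncard {x : {y : V // y ≠ v} | (G.induce {y : V | y ≠ v}).Reachable ⟨u.1, u.2⟩ ⟨x.1, x.2⟩}

/-- Weight of a vertex: maximal number of edges in a branch at `v`. -/
noncomputable def weight {V : Type*} [Fintype V] [DecidableEq V] (G : SimpleGraph V) (v : V) : ℕ :=
  Finset.univ.sup fun u : {x : V // x ≠ v} => branchSize G v u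

/-- Centroid: vertices of minimum weight. -/
noncomputable def centroid {V : Type*} [Fintype V] [DecidableEq V] (G : SimpleGraph V) : Set V :=
  {v | ∀ u, weight G v ≤ weight G u}

/-- Number of subtrees (vertex sets inducing a connected subgraph) containing all of `A`. -/
noncomputable def numSubtreesOn {V : Type*} (G : SimpleGraph V) (A : Set V) : ℕ :=
  Set.ncard {S : Set V | A ⊆ S ∧ (G.induce S).Connected}

/-- Number of subtrees containing the vertex `v`. -/
noncomputable def numSubtrees {V : Type*} (G : SimpleGraph V) (v : V) : ℕ :=
  numSubtreesOn G {v}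

/-- Subtree core: vertices maximizing the number of subtrees containing them. -/
noncomputable def subtreeCore {V : Type*} (G : SimpleGraph V) : Set V :=
  {v | ∀ u, numSubtrees G u ≤ numSubtrees G v}

/-- Distance between two sets of vertices: minimum pairwise distance. -/
noncomputable def setDist {V : Type*} (G : SimpleGraph V) (A B : Set V) : ℕ :=
  sInf {d | ∃ a ∈ A, ∃ b ∈ B, G.dist a b = d}

/-- The path-star tree `P_{n-g,g}`: a path on vertices `0, …, n-g-1` (paper labels
`1, …, n-g`) with `g` pendant vertices `n-g, …, n-1` attached to vertex `n-g-1`. -/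
def pathStar (n g : ℕ) : SimpleGraph (Fin n) :=
  SimpleGraph.fromRel fun i j =>
    (i.val + 1 = j.val ∧ j.val < n - g) ∨ (i.val = n - g - 1 ∧ n - g ≤ j.val)

/-- The tree obtained from `G` by detaching the pendant vertex `y` and attaching it
as a pendant vertex adjacent to `w`. -/
def reattach {V : Type*} (G : SimpleGraph V) (y w : V) : SimpleGraph V :=
  SimpleGraph.fromRel fun a b => (G.Adj a b ∧ a ≠ y ∧ b ≠ y) ∨ (a = y ∧ b = w)

/-!
Let `k ≥ 1` be the distance, attained by a central vertex `c` and a subtree-core vertex `s`, and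
let `v` be the neighbour of `s` towards `c`. Deleting the edge `sv` splits the tree into the side
`A` of `s` and the rest `B`. Geodesics from `v` give `|B|` distinct subtrees containing `v` but
not `s`; as `s` is in the subtree core, at least as many subtrees contain `s` but not `v`, and
those lie in `A`, so `|B| ≤ 2^(|A|-1)`. The neighbour of `c` towards `s` is closer to `s`, hence
not central, so some vertex behind `c` is at distance `ecc c ≥ k + 1` from `c`; the geodesic from
`v` to it runs inside `B` and has length at least `2k`. Hence `n ≥ 2k + 4` and `2k + 2 ≤ 2^g`
for `g = n - 2k - 2`.

In `P_{2k+2,g}` the center is the path vertex `k + 1`. When `2k + 2 ≤ 2^g`, a path vertex `j`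
below the hub lies in fewer subtrees than `j + 1`: at most `j + 1` subtrees contain `j` but not
`j + 1`, while at least `2^g` contain `j + 1` but not `j`. So the subtree core is at the hub or
beyond, at distance at least `k` from the center.
-/

theorem Set.ncard_setOf_mem_and_subset {α : Type*} {a : α} {A : Set α} (hA : A.Finite)
    (ha : a ∈ A) : {S | a ∈ S ∧ S ⊆ A}.ncard = 2 ^ (A.ncard - 1) := by
  have himage : {S | a ∈ S ∧ S ⊆ A} = insert a '' 𝒫 (A \ {a}) := by
    ext S
    constructor
    · rintro ⟨haS, hSA⟩
      refine ⟨S \ {a}, fun x hx => ⟨hSA hx.1, hx.2⟩, ?_⟩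
      rw [insert_sdiff_singleton, insert_eq_of_mem haS]
    · rintro ⟨T, hT, rfl⟩
      exact ⟨Set.mem_insert a T, Set.insert_subset ha (hT.trans Set.sdiff_subset)⟩
  rw [himage, (Set.powerset_insert_injOn (by simp)).ncard_image,
    Set.ncard_powerset _ hA.sdiff, Set.ncard_sdiff_singleton_of_mem ha]

namespace SimpleGraph

variable {V : Type*} {G : SimpleGraph V}

theorem Walk.dist_add_dist_of_mem_support {u v w : V} {p : G.Walk u v}
    (hp : p.length = G.dist u v) (hw : w ∈ p.support) :
    G.dist u w + G.dist w v = G.dist u v := by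
  obtain ⟨q, r, rfl⟩ := Walk.mem_support_iff_exists_append.mp hw
  have hq := dist_le q
  have hr := dist_le r
  have htri := q.reachable.dist_triangle_left v
  rw [Walk.length_append] at hp
  omega

theorem Reachable.exists_adj_dist_add_one_eq {u w : V} (h : G.Reachable u w) (hne : u ≠ w) :
    ∃ v, G.Adj u v ∧ G.dist v w + 1 = G.dist u w := by
  obtain ⟨p, hp⟩ := h.exists_walk_length_eq_dist
  cases p with
  | nil => exact absurd rfl hne
  | cons hadj q =>
    refine ⟨_, hadj, ?_⟩
    have hq := dist_le q
    have htri := hadj.reachable.dist_triangle_left w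
    rw [dist_eq_one_iff_adj.mpr hadj] at htri
    rw [Walk.length_cons] at hp
    omega

theorem exists_walk_length_le_of_forall_exists_adj_lt {r : V} (f : V → ℕ)
    (hf : ∀ x, x ≠ r → ∃ y, G.Adj x y ∧ f y < f x) (x : V) :
    ∃ p : G.Walk x r, p.length ≤ f x := by
  induction hx : f x using Nat.strong_induction_on generalizing x with
  | _ N ih =>
    by_cases hxr : x = r
    · subst hxr
      exact ⟨.nil, Nat.zero_le _⟩
    · obtain ⟨y, hxy, hlt⟩ := hf x hxr
      obtain ⟨p, hp⟩ := ih (f y) (hx ▸ hlt) y rfl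
      exact ⟨.cons hxy p, by rw [Walk.length_cons]; omega⟩

theorem exists_adj_mem_notMem_of_connected_induce {S P : Set V} (hS : (G.induce S).Connected)
    {x z : V} (hx : x ∈ S) (hz : z ∈ S) (hxP : x ∈ P) (hzP : z ∉ P) :
    ∃ a ∈ S, ∃ b ∈ S, G.Adj a b ∧ a ∈ P ∧ b ∉ P := by
  obtain ⟨p⟩ := hS.preconnected ⟨x, hx⟩ ⟨z, hz⟩
  obtain ⟨d, -, hd₁, hd₂⟩ := p.exists_boundary_dart {t | t.1 ∈ P} hxP hzP
  exact ⟨d.fst, d.fst.2, d.snd, d.snd.2, d.adj, hd₁, hd₂⟩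

theorem induce_connected_of_forall_exists_adj_lt {S : Set V} {r : V} (hr : r ∈ S) (f : V → ℕ)
    (hf : ∀ x ∈ S, x ≠ r → ∃ y ∈ S, G.Adj x y ∧ f y < f x) :
    (G.induce S).Connected := by
  have hreach (x : S) : (G.induce S).Reachable x ⟨r, hr⟩ := by
    refine (exists_walk_length_le_of_forall_exists_adj_lt (f ∘ Subtype.val) (fun x hx => ?_) x
      ).elim fun p _ => ⟨p⟩
    obtain ⟨y, hy, hxy, hlt⟩ := hf x x.2 (fun h => hx (Subtype.ext h))
    exact ⟨⟨y, hy⟩, hxy, hlt⟩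
  exact (connected_iff _).mpr ⟨fun x y => (hreach x).trans (hreach y).symm, ⟨⟨r, hr⟩⟩⟩

def edgeSide (G : SimpleGraph V) (u v : V) : Set V :=
  {x | (G.deleteEdges {s(u, v)}).Reachable u x}

section edgeSide

variable {u v : V}

theorem mem_edgeSide_self : u ∈ G.edgeSide u v := Reachable.refl _

theorem eq_of_adj_of_mem_edgeSide {a b : V} (hab : G.Adj a b) (ha : a ∈ G.edgeSide u v)
    (hb : b ∉ G.edgeSide u v) : a = u ∧ b = v := by
  by_cases he : s(a, b) = s(u, v)
  · rcases Sym2.eq_iff.mp he with h | ⟨-, rfl⟩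
    · exact h
    · exact absurd mem_edgeSide_self hb
  · have hab' : (G.deleteEdges {s(u, v)}).Adj a b := by
      simpa [deleteEdges_adj, hab] using he
    exact absurd (ha.trans hab'.reachable) hb

theorem Walk.mem_support_of_mem_edgeSide {x y : V} (p : G.Walk x y) (hx : x ∈ G.edgeSide u v)
    (hy : y ∉ G.edgeSide u v) : u ∈ p.support ∧ v ∈ p.support := by
  obtain ⟨d, hd, hd₁, hd₂⟩ := p.exists_boundary_dart _ hx hy
  obtain ⟨rfl, rfl⟩ := eq_of_adj_of_mem_edgeSide d.adj hd₁ hd₂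
  exact ⟨p.dart_fst_mem_support_of_mem_darts hd, p.dart_snd_mem_support_of_mem_darts hd⟩

theorem subset_edgeSide_of_connected {S : Set V} (hS : (G.induce S).Connected) (hu : u ∈ S)
    (hv : v ∉ S) : S ⊆ G.edgeSide u v := by
  intro x hx
  by_contra hxA
  obtain ⟨a, -, b, hb, hab, ha, hbA⟩ :=
    exists_adj_mem_notMem_of_connected_induce hS hu hx mem_edgeSide_self hxA
  exact hv ((eq_of_adj_of_mem_edgeSide hab ha hbA).2 ▸ hb)

variable (hconn : G.Connected) (hadj : G.Adj u v)
include hconn hadj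

theorem Connected.dist_eq_dist_add_one_add_dist {x y : V} (hx : x ∈ G.edgeSide u v)
    (hy : y ∉ G.edgeSide u v) : G.dist x y = G.dist x u + 1 + G.dist v y := by
  obtain ⟨p, hp⟩ := hconn.exists_walk_length_eq_dist x y
  obtain ⟨q, hq⟩ := hconn.exists_walk_length_eq_dist u y
  have hxu := Walk.dist_add_dist_of_mem_support hp (p.mem_support_of_mem_edgeSide hx hy).1
  have huv := Walk.dist_add_dist_of_mem_support hq (q.mem_support_of_mem_edgeSide
    mem_edgeSide_self hy).2
  rw [dist_eq_one_iff_adj.mpr hadj] at huv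
  omega

theorem Connected.notMem_edgeSide_of_mem_support {y z : V} (hy : y ∉ G.edgeSide u v)
    {p : G.Walk v y} (hp : p.length = G.dist v y) (hz : z ∈ p.support) :
    z ∉ G.edgeSide u v := fun hzA => by
  have := hconn.dist_eq_dist_add_one_add_dist hadj hzA hy
  have := Walk.dist_add_dist_of_mem_support hp hz
  omega

theorem Connected.dist_add_one_le_ncard_compl_edgeSide [Finite V] {w : V}
    (hw : w ∉ G.edgeSide u v) : G.dist v w + 1 ≤ (G.edgeSide u v)ᶜ.ncard := by
  classical
  obtain ⟨p, hpath, hp⟩ := hconn.exists_path_of_dist v w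
  calc G.dist v w + 1 = p.support.toFinset.card := by
        rw [List.toFinset_card_of_nodup hpath.support_nodup, Walk.length_support, hp]
    _ = (p.support.toFinset : Set V).ncard := (Set.ncard_coe_finset _).symm
    _ ≤ (G.edgeSide u v)ᶜ.ncard := Set.ncard_le_ncard fun z hz =>
        hconn.notMem_edgeSide_of_mem_support hadj hw hp (by simpa using hz)

end edgeSide

theorem IsTree.notMem_edgeSide (hT : G.IsTree) {u v : V} (hadj : G.Adj u v) :
    v ∉ G.edgeSide u v :=
  isBridge_iff.mp (isAcyclic_iff_forall_adj_isBridge.mp hT.isAcyclic hadj)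

theorem IsTree.mem_edgeSide_iff (hT : G.IsTree) {u v x : V} (hadj : G.Adj u v) :
    x ∈ G.edgeSide u v ↔ G.dist x u < G.dist x v := by
  have hv := hT.notMem_edgeSide hadj
  constructor
  · intro hx
    have := hT.connected.dist_eq_dist_add_one_add_dist hadj hx hv
    simp only [dist_self] at this
    omega
  · intro hlt
    by_contra hx
    have := hT.connected.dist_eq_dist_add_one_add_dist hadj mem_edgeSide_self hx
    rw [dist_self, dist_comm, dist_comm (u := v)] at this
    omega

end SimpleGraph

def subtreesAvoiding {V : Type*} (G : SimpleGraph V) (u v : V) : Set (Set V) :=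
  {S | u ∈ S ∧ (G.induce S).Connected ∧ v ∉ S}

section Subtrees

variable {V : Type*} [Finite V]

theorem numSubtrees_eq_numSubtreesOn_add (G : SimpleGraph V) (u v : V) :
    numSubtrees G u = numSubtreesOn G {u, v} + (subtreesAvoiding G u v).ncard := by
  have hsplit : {S : Set V | {u} ⊆ S ∧ (G.induce S).Connected} =
      {S | {u, v} ⊆ S ∧ (G.induce S).Connected} ∪ subtreesAvoiding G u v := by
    ext S
    simp only [subtreesAvoiding, Set.mem_ofPred_eq, Set.mem_union, Set.singleton_subset_iff,
      Set.insert_subset_iff]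
    tauto
  rw [numSubtrees, numSubtreesOn, hsplit, Set.ncard_union_eq, numSubtreesOn]
  exact Set.disjoint_left.mpr fun S hS hS' => hS'.2.2 (hS.1 (by simp))

theorem numSubtrees_add_ncard_subtreesAvoiding (G : SimpleGraph V) (u v : V) :
    numSubtrees G u + (subtreesAvoiding G v u).ncard =
      numSubtrees G v + (subtreesAvoiding G u v).ncard := by
  rw [numSubtrees_eq_numSubtreesOn_add G u v, numSubtrees_eq_numSubtreesOn_add G v u,
    Set.pair_comm]
  ring

theorem ncard_subtreesAvoiding_le_two_pow (G : SimpleGraph V) (u v : V) :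
    (subtreesAvoiding G u v).ncard ≤ 2 ^ ((G.edgeSide u v).ncard - 1) :=
  calc (subtreesAvoiding G u v).ncard
      ≤ {S | u ∈ S ∧ S ⊆ G.edgeSide u v}.ncard :=
        Set.ncard_le_ncard fun _ ⟨hu, hS, hv⟩ => ⟨hu, subset_edgeSide_of_connected hS hu hv⟩
    _ = 2 ^ ((G.edgeSide u v).ncard - 1) :=
        Set.ncard_setOf_mem_and_subset (Set.toFinite _) mem_edgeSide_self

/-- Each vertex `x` beyond the edge `uv` yields the subtree spanned by a geodesic from `v` to
`x`, and these subtrees are distinct. -/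
theorem SimpleGraph.Connected.ncard_compl_edgeSide_le {G : SimpleGraph V} (hconn : G.Connected)
    {u v : V} (hadj : G.Adj u v) :
    (G.edgeSide u v)ᶜ.ncard ≤ (subtreesAvoiding G v u).ncard := by
  choose p hp using hconn.exists_walk_length_eq_dist v
  refine Set.ncard_le_ncard_of_injOn (fun x => {z | z ∈ (p x).support}) ?_ ?_ (Set.toFinite _)
  · intro x hx
    exact ⟨(p x).start_mem_support, (p x).connected_induce_support,
      fun hu => hconn.notMem_edgeSide_of_mem_support hadj hx (hp x) hu mem_edgeSide_self⟩
  · intro x _ y _ hxy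
    have hy : y ∈ (p x).support := (Set.ext_iff.mp hxy y).mpr (p y).end_mem_support
    have hx : x ∈ (p y).support := (Set.ext_iff.mp hxy x).mp (p x).end_mem_support
    have := Walk.dist_add_dist_of_mem_support (hp x) hy
    have := Walk.dist_add_dist_of_mem_support (hp y) hx
    rw [← hconn.dist_eq_zero_iff, dist_comm]
    omega

end Subtrees

section Center

variable {V : Type*} [Fintype V]

theorem dist_le_ecc (G : SimpleGraph V) (x v : V) : G.dist x v ≤ ecc G v :=
  Finset.le_sup (f := fun u => G.dist u v) (Finset.mem_univ x)

theorem nonempty_center [Nonempty V] (G : SimpleGraph V) : (_root_.center G).Nonempty :=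
  let ⟨c, hc⟩ := Finite.exists_min (ecc G)
  ⟨c, hc⟩

theorem exists_dist_eq_ecc_of_adj_of_notMem_center {G : SimpleGraph V} {c c' : V}
    (hc : c ∈ _root_.center G)
    (hadj : G.Adj c c') (hc' : c' ∉ _root_.center G) :
    ∃ w, G.dist w c = ecc G c ∧ G.dist w c' = ecc G c + 1 := by
  obtain ⟨u, hu⟩ : ∃ u, ecc G u < ecc G c' := by simpa [_root_.center] using hc'
  obtain ⟨w, -, hw⟩ := Finset.lt_sup_iff.mp ((hc u).trans_lt hu)
  have htri := hadj.reachable.dist_triangle_right w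
  rw [dist_eq_one_iff_adj.mpr hadj] at htri
  have := dist_le_ecc G w c
  exact ⟨w, by omega, by omega⟩

end Center

section SetDist

variable {V : Type*} {G : SimpleGraph V} {A B : Set V}

theorem setDist_le_dist {a b : V} (ha : a ∈ A) (hb : b ∈ B) : setDist G A B ≤ G.dist a b :=
  Nat.sInf_le ⟨a, ha, b, hb, rfl⟩

theorem exists_dist_eq_setDist (hA : A.Nonempty) (hB : B.Nonempty) :
    ∃ a ∈ A, ∃ b ∈ B, G.dist a b = setDist G A B :=
  let ⟨a, ha⟩ := hA
  let ⟨b, hb⟩ := hB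
  Nat.sInf_mem (s := {d | ∃ a ∈ A, ∃ b ∈ B, G.dist a b = d}) ⟨_, a, ha, b, hb, rfl⟩

end SetDist

theorem nonempty_subtreeCore {V : Type*} [Finite V] [Nonempty V] (G : SimpleGraph V) :
    (subtreeCore G).Nonempty :=
  let ⟨s, hs⟩ := Finite.exists_max (numSubtrees G)
  ⟨s, hs⟩

theorem Nat.exists_eq_add_and_le_two_pow {N a q k : ℕ} (hN : a + q = N) (hk : 1 ≤ k)
    (hq : 2 * k + 1 ≤ q) (hqa : q ≤ 2 ^ (a - 1)) :
    ∃ g, N = 2 * k + 2 + g ∧ 2 ≤ g ∧ 2 * k + 2 ≤ 2 ^ g := by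
  obtain ⟨t, rfl⟩ : ∃ t, a = t + 3 := by
    refine ⟨a - 3, ?_⟩
    by_contra
    have := Nat.pow_le_pow_right two_pos (show a - 1 ≤ 1 by omega)
    omega
  refine ⟨t + 2 + (q - (2 * k + 1)), by omega, by omega, ?_⟩
  have hpow : 2 ^ (t + 1 + 1) ≤ 2 ^ (t + 2 + (q - (2 * k + 1))) :=
    Nat.pow_le_pow_right two_pos (by omega)
  rw [show t + 3 - 1 = t + 1 + 1 by rfl] at hqa
  rw [pow_succ] at hqa hpow
  omega

section Tree

variable {V : Type*} [Fintype V] {G : SimpleGraph V}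

theorem SimpleGraph.IsTree.two_mul_dist_add_one_le_ncard_compl_edgeSide (hT : G.IsTree)
    {c s v x : V} (hc : c ∈ _root_.center G)
    (hnearest : ∀ c' ∈ _root_.center G, G.dist s c ≤ G.dist s c') (hsv : G.Adj s v)
    (hv : G.dist v c + 1 = G.dist s c) (hx : x ∈ G.edgeSide s v) (hxs : x ≠ s) :
    2 * G.dist s c + 1 ≤ (G.edgeSide s v)ᶜ.ncard := by
  have hconn := hT.connected
  have hcA : c ∉ G.edgeSide s v := by
    rw [hT.mem_edgeSide_iff hsv, dist_comm, dist_comm (u := c)]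
    omega
  have hecc : G.dist s c + 1 ≤ ecc G c := by
    have := hconn.dist_eq_dist_add_one_add_dist hsv hx hcA
    have := hconn.pos_dist_of_ne hxs
    have := dist_le_ecc G x c
    omega
  obtain ⟨c', hcc', hc'⟩ := (hconn c s).exists_adj_dist_add_one_eq (by rintro rfl; simp at hv)
  have hc'C : c' ∉ _root_.center G := fun h => by
    have := hnearest c' h
    rw [dist_comm, dist_comm (u := s)] at this
    omega
  rw [dist_comm (u := c)] at hc'
  obtain ⟨w, hwc, hwc'⟩ := exists_dist_eq_ecc_of_adj_of_notMem_center hc hcc' hc'C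
  have hsA' : s ∉ G.edgeSide c c' := by
    rw [hT.mem_edgeSide_iff hcc', dist_comm (u := s) (v := c')]
    omega
  have hws := hconn.dist_eq_dist_add_one_add_dist (x := w) hcc'
    ((hT.mem_edgeSide_iff hcc').mpr (by omega)) hsA'
  have hwA : w ∉ G.edgeSide s v := by
    rw [hT.mem_edgeSide_iff hsv]
    have := hconn.dist_triangle (u := w) (v := c) (w := v)
    rw [dist_comm (u := c) (v := v)] at this
    omega
  have hsw := hconn.dist_eq_dist_add_one_add_dist hsv mem_edgeSide_self hwA
  have := hconn.dist_add_one_le_ncard_compl_edgeSide hsv hwA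
  rw [dist_self, dist_comm (u := s) (v := w)] at hsw
  omega

theorem SimpleGraph.IsTree.exists_card_eq_add_and_le_two_pow (hT : G.IsTree)
    (hcard : 3 ≤ Fintype.card V) (hk : 1 ≤ setDist G (_root_.center G) (subtreeCore G)) :
    ∃ g, Fintype.card V = 2 * setDist G (_root_.center G) (subtreeCore G) + 2 + g ∧ 2 ≤ g ∧
      2 * setDist G (_root_.center G) (subtreeCore G) + 2 ≤ 2 ^ g := by
  have : Nonempty V := Fintype.card_pos_iff.mp (by omega)
  obtain ⟨c, hc, s, hs, hcs⟩ :=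
    exists_dist_eq_setDist (G := G) (nonempty_center G) (nonempty_subtreeCore G)
  rw [dist_comm] at hcs
  obtain ⟨v, hsv, hv⟩ :=
    (hT.connected s c).exists_adj_dist_add_one_eq (by rintro rfl; rw [dist_self] at hcs; omega)
  have hsplit : (G.edgeSide s v).ncard + (G.edgeSide s v)ᶜ.ncard = Fintype.card V := by
    rw [Set.ncard_add_ncard_compl, Nat.card_eq_fintype_card]
  have hchain : (G.edgeSide s v)ᶜ.ncard ≤ 2 ^ ((G.edgeSide s v).ncard - 1) := by
    have := hT.connected.ncard_compl_edgeSide_le hsv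
    have := numSubtrees_add_ncard_subtreesAvoiding G s v
    have := hs v
    have := ncard_subtreesAvoiding_le_two_pow G s v
    omega
  have hA : 1 < (G.edgeSide s v).ncard := by
    by_contra! hA
    rw [Nat.sub_eq_zero_of_le hA, pow_zero] at hchain
    omega
  obtain ⟨x, hx, hxs⟩ := Set.exists_ne_of_one_lt_ncard hA s
  have hmain := hT.two_mul_dist_add_one_le_ncard_compl_edgeSide hc
    (fun c' hc' => by rw [hcs, dist_comm]; exact setDist_le_dist hc' hs) hsv hv hx hxs
  rw [hcs] at hmain
  exact Nat.exists_eq_add_and_le_two_pow hsplit hk hmain hchain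

end Tree

section PathStar

variable {m g : ℕ}

theorem pathStar_adj {x y : Fin (m + g)} :
    (pathStar (m + g) g).Adj x y ↔ x.val ≠ y.val ∧
      (x.val + 1 = y.val ∧ y.val < m ∨ y.val + 1 = x.val ∧ x.val < m ∨
        x.val = m - 1 ∧ m ≤ y.val ∨ y.val = m - 1 ∧ m ≤ x.val) := by
  simp only [pathStar, fromRel_adj, Nat.add_sub_cancel, ne_eq, Fin.ext_iff]
  tauto

theorem pathStar_exists_walk_length_le {ρ : ℕ} (hρ : ρ < m) (x : Fin (m + g)) :
    ∃ p : (pathStar (m + g) g).Walk x ⟨ρ, by omega⟩,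
      p.length ≤ if x.val < m then (x.val - ρ) + (ρ - x.val) else m - ρ := by
  -- in `ℕ`, `(x - ρ) + (ρ - x)` is `|x - ρ|`
  refine exists_walk_length_le_of_forall_exists_adj_lt
    (fun x : Fin (m + g) => if x.val < m then (x.val - ρ) + (ρ - x.val) else m - ρ)
    (fun x hx => ?_) x
  have hxρ : x.val ≠ ρ := fun h => hx (Fin.ext h)
  by_cases hxm : x.val < m
  · by_cases hlt : x.val < ρ
    · exact ⟨⟨x.val + 1, by omega⟩, pathStar_adj.mpr (by simp; omega),
        by simp; split_ifs <;> omega⟩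
    · exact ⟨⟨x.val - 1, by omega⟩, pathStar_adj.mpr (by simp; omega),
        by simp; split_ifs <;> omega⟩
  · exact ⟨⟨m - 1, by omega⟩, pathStar_adj.mpr (by simp; omega),
      by simp; split_ifs <;> omega⟩

theorem pathStar_connected (hm : 1 ≤ m) : (pathStar (m + g) g).Connected := by
  have hreach (x : Fin (m + g)) : (pathStar (m + g) g).Reachable x ⟨0, by omega⟩ :=
    (pathStar_exists_walk_length_le hm x).elim fun p _ => ⟨p⟩
  exact (connected_iff _).mpr
    ⟨fun x y => (hreach x).trans (hreach y).symm, ⟨⟨0, by omega⟩⟩⟩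

theorem min_val_le_min_val_add_length_pathStar {x y : Fin (m + g)} (p : (pathStar (m + g) g).Walk x y) :
    min x.val m ≤ min y.val m + p.length := by
  induction p with
  | nil => simp
  | cons h _ ih =>
    rw [pathStar_adj] at h
    rw [Walk.length_cons]
    omega

theorem min_val_le_min_val_add_dist_pathStar (hm : 1 ≤ m) (x y : Fin (m + g)) :
    min x.val m ≤ min y.val m + (pathStar (m + g) g).dist x y := by
  obtain ⟨p, hp⟩ := (pathStar_connected hm).exists_walk_length_eq_dist x y
  exact hp ▸ min_val_le_min_val_add_length_pathStar p

theorem induce_connected_pathStar {i : ℕ} (hi : i < m) {J : Set (Fin (m + g))}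
    (hJ : ∀ x ∈ J, m ≤ x.val) :
    ((pathStar (m + g) g).induce ({x | i ≤ x.val ∧ x.val < m} ∪ J)).Connected := by
  refine induce_connected_of_forall_exists_adj_lt (r := ⟨m - 1, by omega⟩)
    (Or.inl ⟨by simp; omega, by simp; omega⟩) (fun x => (m - 1 - x.val) + (x.val - (m - 1)))
    fun x hx hxr => ?_
  have hxr : x.val ≠ m - 1 := fun h => hxr (Fin.ext h)
  rcases hx with ⟨hix, hxm⟩ | hxJ
  · exact ⟨⟨x.val + 1, by omega⟩, Or.inl ⟨by simp; omega, by simp; omega⟩,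
      pathStar_adj.mpr (by simp; omega), by simp; omega⟩
  · have := hJ x hxJ
    exact ⟨⟨m - 1, by omega⟩, Or.inl ⟨by simp; omega, by simp; omega⟩,
      pathStar_adj.mpr (by simp; omega), by simp; omega⟩

theorem ecc_pathStar_le (k : ℕ) :
    ecc (pathStar (2 * k + 2 + g) g) ⟨k + 1, by omega⟩ ≤ k + 1 :=
  Finset.sup_le fun x _ =>
    let ⟨p, hp⟩ := pathStar_exists_walk_length_le (show k + 1 < 2 * k + 2 by omega) x
    (dist_le p).trans (hp.trans (by split_ifs <;> omega))

theorem val_eq_of_mem_center_pathStar {k : ℕ} (hg : 1 ≤ g) {v : Fin (2 * k + 2 + g)}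
    (hv : v ∈ _root_.center (pathStar (2 * k + 2 + g) g)) : v.val = k + 1 := by
  have hecc := (hv ⟨k + 1, by omega⟩).trans (ecc_pathStar_le k)
  have h₀ := min_val_le_min_val_add_dist_pathStar (by omega) v ⟨0, by omega⟩
  have h₁ := min_val_le_min_val_add_dist_pathStar (by omega) ⟨2 * k + 2, by omega⟩ v
  have := dist_le_ecc (pathStar (2 * k + 2 + g) g) ⟨0, by omega⟩ v
  have := dist_le_ecc (pathStar (2 * k + 2 + g) g) ⟨2 * k + 2, by omega⟩ v
  rw [dist_comm] at h₀
  simp only at h₀ h₁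
  omega

theorem mem_of_connected_induce_pathStar {S : Set (Fin (m + g))}
    (hS : ((pathStar (m + g) g).induce S).Connected) {x y z : Fin (m + g)} (hx : x ∈ S)
    (hz : z ∈ S) (hxy : x.val < y.val) (hyz : y.val ≤ z.val) (hym : y.val < m) : y ∈ S := by
  obtain ⟨a, -, b, hb, hab, ha, hb'⟩ := exists_adj_mem_notMem_of_connected_induce
    (P := {t : Fin (m + g) | t.val < y.val}) hS hx hz hxy (by simpa using hyz)
  rw [pathStar_adj] at hab
  simp only [Set.mem_ofPred_eq, not_lt] at ha hb'
  have : b = y := Fin.ext (by omega)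
  exact this ▸ hb

theorem ncard_subtreesAvoiding_pathStar_le {j : ℕ} (hj : j + 1 < m) :
    (subtreesAvoiding (pathStar (m + g) g) ⟨j, by omega⟩ ⟨j + 1, by omega⟩).ncard ≤
      j + 1 := by
  have hinterval :
      ∀ S ∈ subtreesAvoiding (pathStar (m + g) g) ⟨j, by omega⟩ ⟨j + 1, by omega⟩,
      ∀ t, t ∈ S ↔ sInf (Fin.val '' S) ≤ t.val ∧ t.val ≤ j := by
    rintro S ⟨hjS, hS, hj₁S⟩ t
    have hle : ∀ t ∈ S, t.val ≤ j := fun t ht => by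
      by_contra h
      exact hj₁S (mem_of_connected_induce_pathStar hS hjS ht (by simp) (by simp; omega)
        (by simp; omega))
    obtain ⟨x, hxS, hx⟩ := Nat.sInf_mem (s := Fin.val '' S) ⟨j, _, hjS, rfl⟩
    refine ⟨fun ht => ⟨Nat.sInf_le ⟨t, ht, rfl⟩, hle t ht⟩, fun ⟨h₁, h₂⟩ => ?_⟩
    rcases h₁.lt_or_eq with hlt | heq
    · exact mem_of_connected_induce_pathStar hS hxS hjS (hx ▸ hlt) h₂ (by omega)
    · exact (Fin.ext (hx.trans heq) : x = t) ▸ hxS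
  calc _ ≤ (↑(Finset.range (j + 1)) : Set ℕ).ncard := by
        refine Set.ncard_le_ncard_of_injOn (fun S => sInf (Fin.val '' S)) ?_ ?_
          (Set.toFinite _)
        · intro S hS
          simpa [Nat.lt_succ_iff] using Nat.sInf_le (s := Fin.val '' S) ⟨_, hS.1, rfl⟩
        · intro S₁ h₁ S₂ h₂ heq
          ext t
          simp only at heq
          rw [hinterval S₁ h₁, hinterval S₂ h₂, heq]
    _ = j + 1 := by simp

theorem two_pow_le_ncard_subtreesAvoiding_pathStar {j : ℕ} (hj : j + 1 < m) :
    2 ^ g ≤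
      (subtreesAvoiding (pathStar (m + g) g) ⟨j + 1, by omega⟩ ⟨j, by omega⟩).ncard := by
  have hpend (J : Set (Fin g)) : ∀ x ∈ Fin.natAdd m '' J, m ≤ x.val := by
    rintro _ ⟨i, -, rfl⟩
    simp
  calc 2 ^ g = (Set.univ : Set (Set (Fin g))).ncard := by simp [Set.ncard_univ]
    _ ≤ _ := by
      refine Set.ncard_le_ncard_of_injOn
        (fun J => {x | j + 1 ≤ x.val ∧ x.val < m} ∪ Fin.natAdd m '' J) ?_ ?_ (Set.toFinite _)
      · intro J _
        refine ⟨Or.inl ⟨le_rfl, hj⟩, induce_connected_pathStar (by omega) (hpend J), ?_⟩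
        rintro (⟨h, -⟩ | h)
        · simp at h
        · have := hpend J _ h
          simp at this
          omega
      · intro J₁ _ J₂ _ heq
        ext i
        simpa [(Fin.natAdd_injective m g).mem_set_image] using
          Set.ext_iff.mp heq (Fin.natAdd m i)

theorem le_val_of_mem_subtreeCore_pathStar (hm : m ≤ 2 ^ g) {v : Fin (m + g)}
    (hv : v ∈ subtreeCore (pathStar (m + g) g)) : m - 1 ≤ v.val := by
  obtain ⟨j, hjn⟩ := v
  by_contra! hlt
  have hj : j + 1 < m := by simp only at hlt; omega
  have := numSubtrees_add_ncard_subtreesAvoiding (pathStar (m + g) g) ⟨j, hjn⟩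
    ⟨j + 1, by omega⟩
  have := ncard_subtreesAvoiding_pathStar_le (g := g) hj
  have := two_pow_le_ncard_subtreesAvoiding_pathStar (g := g) hj
  have := hv ⟨j + 1, by omega⟩
  omega

theorem le_setDist_pathStar (k : ℕ) (hg : 1 ≤ g) (hpow : 2 * k + 2 ≤ 2 ^ g) :
    k ≤ setDist (pathStar (2 * k + 2 + g) g) (_root_.center (pathStar (2 * k + 2 + g) g))
      (subtreeCore (pathStar (2 * k + 2 + g) g)) := by
  have : Nonempty (Fin (2 * k + 2 + g)) := ⟨⟨0, by omega⟩⟩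
  obtain ⟨a, ha, b, hb, hab⟩ := exists_dist_eq_setDist (G := pathStar (2 * k + 2 + g) g)
    (nonempty_center _) (nonempty_subtreeCore _)
  have := val_eq_of_mem_center_pathStar hg ha
  have := le_val_of_mem_subtreeCore_pathStar hpow hb
  have := min_val_le_min_val_add_dist_pathStar (by omega) b a
  rw [dist_comm] at this
  omega

end PathStar

theorem exists_pathStar_dist_center_subtreeCore_ge_general (n : ℕ) (hn : 5 ≤ n)
    {V : Type} [Fintype V] (G : SimpleGraph V)
    (hcard : Fintype.card V = n) (hT : G.IsTree) :
    ∃ g, 2 ≤ g ∧ g ≤ n - 3 ∧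
      setDist G (_root_.center G) (subtreeCore G)
        ≤ setDist (pathStar n g) (_root_.center (pathStar n g)) (subtreeCore (pathStar n g)) := by
  rcases Nat.eq_zero_or_pos (setDist G (_root_.center G) (subtreeCore G)) with hk | hk
  · exact ⟨n - 3, by omega, le_rfl, hk ▸ Nat.zero_le _⟩
  obtain ⟨g, hng, hg, hpow⟩ := hT.exists_card_eq_add_and_le_two_pow (by omega) hk
  subst hcard
  refine ⟨g, hg, by omega, ?_⟩
  rw [hng]
  exact le_setDist_pathStar _ (by omega) hpow

/-- For every tree on `n ≥ 5` vertices there is a path-star tree `P_{n-g,g}` whose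
center–subtree-core distance is at least that of the given tree. -/
theorem exists_pathStar_dist_center_subtreeCore_ge (n : ℕ) (hn : 5 ≤ n)
    {V : Type} [Fintype V] [DecidableEq V] (G : SimpleGraph V)
    (hcard : Fintype.card V = n) (hT : G.IsTree) :
    ∃ g, 2 ≤ g ∧ g ≤ n - 3 ∧
      setDist G (_root_.center G) (subtreeCore G)
        ≤ setDist (pathStar n g) (_root_.center (pathStar n g)) (subtreeCore (pathStar n g)) :=
  exists_pathStar_dist_center_subtreeCore_ge_general n hn G hcard hT
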